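/- arXiv:1807.11903 — 2 statements merged into one kernel-verified Lean document; each statement's English description precedes it below -/
import Mathlib

section
/- Let E be the complexification of a real non-circular ellipse and let T_β denote the tangent line to E at a point β of E lying on the line at infinity. Then a line B through β with B ≠ T_β cannot satisfy that both B and the infinity line are invariant under reflection with respect to T_β unless B = T_β; consequently, if β is an infinite point of E and B is a line through β that reflects to itself under the reflection with respect to T_β, then B = T_β. -/
/-!
The direction `d` of the infinite point is non-isotropic because `a ≠ b`, so `d` and its
rotation `perp d` form an orthogonal basis and the tangent line `T` is the line `ℂ • d`.
A nontrivial affine isometry fixing `T` pointwise is linear, fixes `d` and must send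
`perp d` to `-perp d`. If it maps the line `p₀ + ℂ • d` into itself, comparing
`perp d`-components of `p₀` and its image gives `dot p₀ (perp d) = 0`, so `p₀ ∈ T`
and the line is `T`.
-/

namespace PlaneGeometry

variable {K : Type*} [Field K]

def dot (v w : K × K) : K := v.1 * w.1 + v.2 * w.2

def perp (d : K × K) : K × K := (d.2, -d.1)

theorem dot_comm (v w : K × K) : dot v w = dot w v := by
  simp only [dot]; ring

@[simp]
theorem dot_add_left (u v w : K × K) : dot (u + v) w = dot u w + dot v w := by
  simp only [dot, Prod.fst_add, Prod.snd_add]; ring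

theorem dot_sub_left (u v w : K × K) : dot (u - v) w = dot u w - dot v w := by
  simp only [dot, Prod.fst_sub, Prod.snd_sub]; ring

@[simp]
theorem dot_smul_left (s : K) (v w : K × K) : dot (s • v) w = s * dot v w := by
  simp only [dot, Prod.smul_fst, Prod.smul_snd, smul_eq_mul]; ring

@[simp]
theorem dot_neg_right (v w : K × K) : dot v (-w) = -dot v w := by
  simp only [dot, Prod.fst_neg, Prod.snd_neg]; ring

@[simp]
theorem dot_perp_self (d : K × K) : dot d (perp d) = 0 := by
  simp only [dot, perp]; ring

@[simp]
theorem dot_perp_perp (d : K × K) : dot (perp d) (perp d) = dot d d := by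
  simp only [dot, perp]; ring

theorem dot_self_ne_zero_of_diag_quadratic_eq_zero {p q : K} (hpq : p ≠ q) (hq : q ≠ 0) {d : K × K}
    (hd : d ≠ 0) (h : p * d.1 ^ 2 + q * d.2 ^ 2 = 0) : dot d d ≠ 0 := by
  intro hdd
  have h₁ : d.1 = 0 := by
    have : (p - q) * d.1 ^ 2 = 0 := by
      simp only [dot] at hdd; linear_combination h - q * hdd
    simpa [sub_ne_zero.mpr hpq] using this
  have h₂ : d.2 = 0 := by simpa [h₁, hq] using h
  exact hd (Prod.ext h₁ h₂)

section Basis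

variable {d : K × K} (hd : dot d d ≠ 0)
include hd

theorem eq_smul_add_smul_perp (w : K × K) :
    w = (dot w d / dot d d) • d + (dot w (perp d) / dot d d) • perp d := by
  have hd' : d.1 ^ 2 + d.2 ^ 2 ≠ 0 := by simpa only [dot, sq] using hd
  simp only [dot, perp]
  ext <;> simp only [Prod.fst_add, Prod.snd_add, Prod.smul_fst, Prod.smul_snd, smul_eq_mul] <;>
    field_simp <;> ring

theorem eq_smul_perp_of_dot_eq_zero {w : K × K} (hw : dot w d = 0) :
    w = (dot w (perp d) / dot d d) • perp d := by
  simpa [hw] using eq_smul_add_smul_perp hd w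

theorem eq_smul_of_dot_perp_eq_zero {w : K × K} (hw : dot w (perp d) = 0) :
    w = (dot w d / dot d d) • d := by
  simpa [hw] using eq_smul_add_smul_perp hd w

theorem setOf_dot_eq_zero_eq_setOf_dot_perp_eq_zero {c : K × K} (hc : c ≠ 0)
    (hcd : dot c d = 0) : {q | dot c q = 0} = {q | dot q (perp d) = 0} := by
  set s := dot c (perp d) / dot d d
  have hcs : c = s • perp d := eq_smul_perp_of_dot_eq_zero hd hcd
  have hs : s ≠ 0 := fun hs ↦ hc (by rw [hcs, hs, zero_smul])
  ext q
  simp only [Set.mem_ofPred_eq, hcs, dot_smul_left, mul_eq_zero, hs, false_or, dot_comm _ q]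

theorem setOf_add_smul_eq_setOf_dot_perp_eq_zero {p : K × K} (hp : dot p (perp d) = 0) :
    {w | ∃ t : K, w = p + t • d} = {q | dot q (perp d) = 0} := by
  ext q
  constructor
  · rintro ⟨t, rfl⟩
    simp [hp]
  · intro hq
    refine ⟨dot (q - p) d / dot d d, ?_⟩
    have hqp : dot (q - p) (perp d) = 0 := by
      rw [dot_sub_left, Set.mem_ofPred_eq.mp hq, hp, sub_zero]
    rw [← eq_smul_of_dot_perp_eq_zero hd hqp, add_sub_cancel]

end Basis

section Isometry

variable {M : (K × K) →ₗ[K] K × K} (hM : ∀ v w, dot (M v) (M w) = dot v w) {d : K × K}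

include hM in
theorem map_perp_eq_or_eq_neg (hd : dot d d ≠ 0) (hMd : M d = d) :
    M (perp d) = perp d ∨ M (perp d) = -perp d := by
  set s := dot (M (perp d)) (perp d) / dot d d
  have hs : M (perp d) = s • perp d := by
    refine eq_smul_perp_of_dot_eq_zero hd ?_
    calc dot (M (perp d)) d = dot (M (perp d)) (M d) := by rw [hMd]
      _ = 0 := by rw [hM, dot_comm, dot_perp_self]
  have hs2 : s ^ 2 = 1 := by
    have := hM (perp d) (perp d)
    rw [hs, dot_smul_left, dot_comm, dot_smul_left, dot_perp_perp] at this
    exact mul_right_cancel₀ hd (by linear_combination this)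
  rcases sq_eq_one_iff.mp hs2 with h | h <;> simp [hs, h]

theorem eq_id_of_map_eq_of_map_perp_eq (hd : dot d d ≠ 0) (hMd : M d = d)
    (hMp : M (perp d) = perp d) : M = LinearMap.id := by
  refine LinearMap.ext fun w ↦ ?_
  rw [eq_smul_add_smul_perp hd w]
  simp [hMd, hMp]

include hM in
theorem dot_perp_eq_zero_of_map_eq_add_smul [NeZero (2 : K)] (hMp : M (perp d) = -perp d)
    {p : K × K} {t : K} (hp : M p = p + t • d) : dot p (perp d) = 0 := by
  have h := hM p (perp d)
  rw [hp, hMp] at h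
  simp only [dot_neg_right, dot_add_left, dot_smul_left, dot_perp_self, mul_zero,
    add_zero] at h
  have h2 : (2 : K) * dot p (perp d) = 0 := by linear_combination -h
  exact (mul_eq_zero.mp h2).resolve_left two_ne_zero

end Isometry

end PlaneGeometry

open PlaneGeometry in
theorem line_through_infinite_point_fixed_by_reflection_general (a b : ℝ) (ha : 0 < a)
    (hb : 0 < b) (hab : a ≠ b) (d : ℂ × ℂ) (hd : d ≠ 0)
    (hβ : (b : ℂ) ^ 2 * d.1 ^ 2 + (a : ℂ) ^ 2 * d.2 ^ 2 = 0)
    (T : Set (ℂ × ℂ))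
    (hT : T = {q : ℂ × ℂ | (b : ℂ) ^ 2 * d.1 * q.1 + (a : ℂ) ^ 2 * d.2 * q.2 = 0})
    (p₀ : ℂ × ℂ) (B : Set (ℂ × ℂ)) (hB : B = {w : ℂ × ℂ | ∃ t : ℂ, w = p₀ + t • d})
    (σ : ℂ × ℂ → ℂ × ℂ)
    (hiso : ∃ (M : (ℂ × ℂ) →ₗ[ℂ] ℂ × ℂ) (c : ℂ × ℂ),
      (∀ w : ℂ × ℂ, σ w = M w + c) ∧
      (∀ w₁ w₂ : ℂ × ℂ,
        (M w₁).1 * (M w₂).1 + (M w₁).2 * (M w₂).2 = w₁.1 * w₂.1 + w₁.2 * w₂.2))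
    (hne : σ ≠ id) (hfix : ∀ q ∈ T, σ q = q)
    (hBfix : σ '' B = B) :
    B = T := by
  subst hB
  obtain ⟨M, c, hσ, hM⟩ := hiso
  have ha₀ : (a : ℂ) ≠ 0 := by exact_mod_cast ha.ne'
  have hb₀ : (b : ℂ) ≠ 0 := by exact_mod_cast hb.ne'
  have hba : (b : ℂ) ^ 2 ≠ (a : ℂ) ^ 2 := by
    exact_mod_cast fun h ↦ hab ((pow_left_inj₀ hb.le ha.le two_ne_zero).mp h).symm
  have hdd : dot d d ≠ 0 := dot_self_ne_zero_of_diag_quadratic_eq_zero hba (pow_ne_zero 2 ha₀) hd hβ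
  -- `T` is the polar of `β`: the kernel of the gradient `n` of the conic at `β`
  set n : ℂ × ℂ := ((b : ℂ) ^ 2 * d.1, (a : ℂ) ^ 2 * d.2)
  have hTn : T = {q | dot n q = 0} := hT
  have hnd : dot n d = 0 := by simp only [dot, n]; linear_combination hβ
  have hn : n ≠ 0 := fun h0 ↦ hd <| Prod.ext
    (by simpa [n, hb₀] using congrArg Prod.fst h0)
    (by simpa [n, ha₀] using congrArg Prod.snd h0)
  have hσM : ∀ w, σ w = M w := by
    have hc : c = 0 := by simpa [hσ] using hfix 0 (by simp [hTn, dot])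
    simp [hσ, hc]
  have hMd : M d = d := by rw [← hσM]; exact hfix d (hTn ▸ hnd)
  have hMp : M (perp d) = -perp d := (map_perp_eq_or_eq_neg hM hdd hMd).resolve_left
    fun h ↦ hne (funext fun w ↦ by simp [hσM, eq_id_of_map_eq_of_map_perp_eq hdd hMd h])
  obtain ⟨t, ht⟩ : σ p₀ ∈ {w | ∃ t : ℂ, w = p₀ + t • d} :=
    hBfix ▸ Set.mem_image_of_mem σ ⟨0, by simp⟩
  have hp₀ := dot_perp_eq_zero_of_map_eq_add_smul hM hMp (hσM p₀ ▸ ht)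
  rw [hTn, setOf_add_smul_eq_setOf_dot_perp_eq_zero hdd hp₀,
    setOf_dot_eq_zero_eq_setOf_dot_perp_eq_zero hdd hn hnd]

/-- Let E be the complexified non-circular ellipse b²x² + a²y² = a²b²z² and
β = [d₁:d₂:0] an infinite point of E (so b²d₁² + a²d₂² = 0, d ≠ 0). Let T be (the affine
part of) the tangent line to E at β, and B a line through β, i.e. an affine line with
direction d. If σ is a reflection with respect to T (a nontrivial affine complex-isometric
involution fixing T pointwise) and B is invariant under σ, then B = T. -/
theorem line_through_infinite_point_fixed_by_reflection (a b : ℝ) (ha : 0 < a)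
    (hb : 0 < b) (hab : a ≠ b) (d : ℂ × ℂ) (hd : d ≠ 0)
    (hβ : (b : ℂ) ^ 2 * d.1 ^ 2 + (a : ℂ) ^ 2 * d.2 ^ 2 = 0)
    (T : Set (ℂ × ℂ))
    (hT : T = {q : ℂ × ℂ | (b : ℂ) ^ 2 * d.1 * q.1 + (a : ℂ) ^ 2 * d.2 * q.2 = 0})
    (p₀ : ℂ × ℂ) (B : Set (ℂ × ℂ)) (hB : B = {w : ℂ × ℂ | ∃ t : ℂ, w = p₀ + t • d})
    (σ : ℂ × ℂ → ℂ × ℂ)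
    (hiso : ∃ (M : (ℂ × ℂ) →ₗ[ℂ] ℂ × ℂ) (c : ℂ × ℂ),
      (∀ w : ℂ × ℂ, σ w = M w + c) ∧
      (∀ w₁ w₂ : ℂ × ℂ,
        (M w₁).1 * (M w₂).1 + (M w₁).2 * (M w₂).2 = w₁.1 * w₂.1 + w₁.2 * w₂.2))
    (hinv : σ ∘ σ = id) (hne : σ ≠ id) (hfix : ∀ q ∈ T, σ q = q)
    (hBfix : σ '' B = B) :
    B = T :=
  line_through_infinite_point_fixed_by_reflection_general a b ha hb hab d hd hβ T hT p₀ B hB σ hiso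
    hne hfix hBfix
end

section
/- Let D be a circle passing through three distinct points of an ellipse E such that at each of these three points the tangent line to D coincides with the tangent line to E. Then E = D, so E is a circle. -/
/-!
Parametrize the ellipse by `(a cos θ, b sin θ)`. On it the equation of the circle becomes
`F(θ) = (a² - b²) cos² θ - 2 a o₁ cos θ - 2 b o₂ sin θ + (b² + |o|² - ρ²) = 0`, and tangency at a
common point says that `F'` vanishes there as well. In the variable `z = e^{iθ}`, `4 z² F` is a
polynomial of degree at most 4 with three distinct double roots, hence zero. So all coefficients
of `F` vanish, which says `a = b`, `o = 0` and `ρ² = b²`.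
-/

open Polynomial Complex

theorem Polynomial.eq_zero_of_natDegree_lt_of_isRoot_derivative {R : Type*} [CommRing R]
    [IsDomain R] {p : R[X]} {S : Finset R} (hdeg : p.natDegree < 2 * S.card)
    (hroot : ∀ z ∈ S, p.IsRoot z ∧ p.derivative.IsRoot z) : p = 0 := by
  classical
  by_contra hp
  have hle : S.val + S.val ≤ p.roots := by
    refine Multiset.le_iff_count.2 fun z => ?_
    rw [Multiset.count_add, count_roots]
    by_cases hz : z ∈ S
    · rw [Multiset.count_eq_one_of_mem S.nodup hz]
      exact (one_lt_rootMultiplicity_iff_isRoot hp).2 (hroot z hz)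
    · simp [Multiset.count_eq_zero_of_notMem hz]
  have := (Multiset.card_le_card hle).trans (card_roots' p)
  simp only [Multiset.card_add, Finset.card_val] at this
  omega

theorem Complex.sq_add_one_of_normSq_eq_one {z : ℂ} (hz : normSq z = 1) :
    z ^ 2 + 1 = 2 * z.re * z := by
  have h := mul_conj z
  have h2 := add_conj z
  rw [hz] at h
  push_cast at h h2
  linear_combination z * h2 - h

theorem Complex.sq_sub_one_of_normSq_eq_one {z : ℂ} (hz : normSq z = 1) :
    z ^ 2 - 1 = 2 * I * z.im * z := by
  have h := mul_conj z
  have h2 := sub_conj z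
  rw [hz] at h
  push_cast at h h2
  linear_combination z * h2 + h

/-- `F(θ) = K cos² θ + L cos θ + M sin θ + N` at `z = e^{iθ}`; `trigQuadraticDeriv` is `dF/dθ`. -/
def trigQuadratic (K L M N : ℝ) (z : ℂ) : ℝ := K * z.re ^ 2 + L * z.re + M * z.im + N

def trigQuadraticDeriv (K L M : ℝ) (z : ℂ) : ℝ := M * z.re - (2 * K * z.re + L) * z.im

/-- `4 z² F` after substituting `cos θ = (z + z⁻¹) / 2` and `sin θ = (z - z⁻¹) / (2i)`. -/
noncomputable def trigQuadraticQuartic (K L M N : ℝ) : ℂ[X] :=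
  C (K : ℂ) * (X ^ 2 + 1) ^ 2 + C (2 * L : ℂ) * X * (X ^ 2 + 1)
    - C (2 * I * M) * X * (X ^ 2 - 1) + C (4 * N : ℂ) * X ^ 2

section TrigQuadratic

variable (K L M N : ℝ)

theorem natDegree_trigQuadraticQuartic_le : (trigQuadraticQuartic K L M N).natDegree ≤ 4 := by
  unfold trigQuadraticQuartic
  compute_degree

theorem eval_trigQuadraticQuartic {z : ℂ} (hz : normSq z = 1) :
    (trigQuadraticQuartic K L M N).eval z = 4 * z ^ 2 * trigQuadratic K L M N z := by
  simp only [trigQuadraticQuartic, trigQuadratic, eval_add, eval_sub, eval_mul, eval_C,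
    eval_X, eval_pow, eval_one, sq_add_one_of_normSq_eq_one hz,
    sq_sub_one_of_normSq_eq_one hz]
  push_cast
  linear_combination (-4 * M * z.im * z ^ 2) * I_sq

theorem eval_derivative_trigQuadraticQuartic {z : ℂ} (hz : normSq z = 1) :
    (trigQuadraticQuartic K L M N).derivative.eval z =
      8 * z * trigQuadratic K L M N z - 4 * I * z * trigQuadraticDeriv K L M z := by
  have hre := re_add_im z
  simp only [trigQuadraticQuartic, trigQuadratic, trigQuadraticDeriv, derivative_add,
    derivative_sub, derivative_mul, derivative_C, derivative_X, derivative_pow, derivative_one,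
    eval_add, eval_sub, eval_mul, eval_C, eval_X, eval_pow, eval_one, zero_mul, zero_add,
    add_zero, sub_zero, mul_one, sq_add_one_of_normSq_eq_one hz, sq_sub_one_of_normSq_eq_one hz]
  push_cast
  linear_combination (-(8 * K * z.re * z + 4 * L * z - 4 * I * M * z)) * hre
    + (-8 * M * z.im * z) * I_sq

theorem trigQuadratic_eq_zero_of_forall_normSq_eq_one
    (h : ∀ z : ℂ, normSq z = 1 → trigQuadratic K L M N z = 0) :
    K = 0 ∧ L = 0 ∧ M = 0 ∧ N = 0 := by
  have h1 := h 1 (by simp)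
  have h2 := h (-1) (by simp)
  have h3 := h I (by simp)
  have h4 := h (-I) (by simp)
  simp only [trigQuadratic, one_re, one_im, neg_re, neg_im, I_re, I_im] at h1 h2 h3 h4
  refine ⟨?_, ?_, ?_, ?_⟩ <;> linarith

theorem trigQuadratic_eq_zero_of_double_zeros {S : Finset ℂ} (hS : 3 ≤ S.card)
    (hunit : ∀ z ∈ S, normSq z = 1) (hzero : ∀ z ∈ S, trigQuadratic K L M N z = 0)
    (hderiv : ∀ z ∈ S, trigQuadraticDeriv K L M z = 0) :
    K = 0 ∧ L = 0 ∧ M = 0 ∧ N = 0 := by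
  have hquartic : trigQuadraticQuartic K L M N = 0 := by
    refine eq_zero_of_natDegree_lt_of_isRoot_derivative (S := S)
      (by linarith [natDegree_trigQuadraticQuartic_le K L M N]) fun z hz => ⟨?_, ?_⟩
    · simp [IsRoot, eval_trigQuadraticQuartic K L M N (hunit z hz), hzero z hz]
    · simp [IsRoot, eval_derivative_trigQuadraticQuartic K L M N (hunit z hz), hzero z hz,
        hderiv z hz]
  refine trigQuadratic_eq_zero_of_forall_normSq_eq_one K L M N fun z hz => ?_
  have hz0 : z ≠ 0 := by rintro rfl; simp at hz
  have := eval_trigQuadraticQuartic K L M N hz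
  rw [hquartic, eval_zero, eq_comm] at this
  simpa [hz0] using this

end TrigQuadratic

/-- Sends `(a cos θ, b sin θ)` to `e^{iθ}`. -/
noncomputable def ellipseToUnitCircle (a b : ℝ) (q : ℝ × ℝ) : ℂ := ⟨q.1 / a, q.2 / b⟩

section Ellipse

variable {a b : ℝ}

theorem ellipseToUnitCircle_injective (ha : a ≠ 0) (hb : b ≠ 0) :
    Function.Injective (ellipseToUnitCircle a b) := by
  intro q q' h
  simp only [ellipseToUnitCircle, Complex.mk.injEq, div_left_inj' ha, div_left_inj' hb] at h
  exact Prod.ext h.1 h.2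

theorem normSq_ellipseToUnitCircle {q : ℝ × ℝ} (hq : q.1 ^ 2 / a ^ 2 + q.2 ^ 2 / b ^ 2 = 1) :
    normSq (ellipseToUnitCircle a b q) = 1 := by
  rw [normSq_mk, ← hq, ellipseToUnitCircle]
  ring

theorem trigQuadratic_ellipseToUnitCircle (ha : a ≠ 0) (hb : b ≠ 0) {o q : ℝ × ℝ} {ρ : ℝ}
    (hE : q.1 ^ 2 / a ^ 2 + q.2 ^ 2 / b ^ 2 = 1)
    (hD : (q.1 - o.1) ^ 2 + (q.2 - o.2) ^ 2 = ρ ^ 2) :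
    trigQuadratic (a ^ 2 - b ^ 2) (-2 * a * o.1) (-2 * b * o.2)
      (b ^ 2 + o.1 ^ 2 + o.2 ^ 2 - ρ ^ 2) (ellipseToUnitCircle a b q) = 0 := by
  simp only [trigQuadratic, ellipseToUnitCircle]
  field_simp at hE ⊢
  linear_combination a ^ 2 * hD - hE

theorem trigQuadraticDeriv_ellipseToUnitCircle (ha : a ≠ 0) (hb : b ≠ 0) {o q : ℝ × ℝ} {t : ℝ}
    (htan : ((q.1 / a ^ 2, q.2 / b ^ 2) : ℝ × ℝ) = t • (q - o)) :
    trigQuadraticDeriv (a ^ 2 - b ^ 2) (-2 * a * o.1) (-2 * b * o.2)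
      (ellipseToUnitCircle a b q) = 0 := by
  simp only [Prod.ext_iff, Prod.smul_fst, Prod.smul_snd, Prod.fst_sub, Prod.snd_sub,
    smul_eq_mul] at htan
  have hcross : q.1 / a ^ 2 * (q.2 - o.2) - q.2 / b ^ 2 * (q.1 - o.1) = 0 := by
    rw [htan.1, htan.2]; ring
  simp only [trigQuadraticDeriv, ellipseToUnitCircle]
  field_simp at hcross ⊢
  linear_combination 2 * hcross

end Ellipse

theorem circle_tangent_at_three_points_general (a b : ℝ) (ha : 0 < a) (hb : 0 < b)
    (o : ℝ × ℝ) (ρ : ℝ)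
    (E D : Set (ℝ × ℝ))
    (hE : E = {p : ℝ × ℝ | p.1 ^ 2 / a ^ 2 + p.2 ^ 2 / b ^ 2 = 1})
    (hD : D = {p : ℝ × ℝ | (p.1 - o.1) ^ 2 + (p.2 - o.2) ^ 2 = ρ ^ 2})
    (p : Fin 3 → ℝ × ℝ) (hinj : Function.Injective p)
    (hmem : ∀ i, p i ∈ E ∧ p i ∈ D)
    (htan : ∀ i, ∃ t : ℝ, t ≠ 0 ∧
      (((p i).1 / a ^ 2, (p i).2 / b ^ 2) : ℝ × ℝ) = t • (p i - o)) :
    E = D ∧ a = b := by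
  subst hE hD
  have hz := (ellipseToUnitCircle_injective ha.ne' hb.ne').comp hinj
  obtain ⟨hK, hL, hM, hN⟩ := trigQuadratic_eq_zero_of_double_zeros (a ^ 2 - b ^ 2)
    (-2 * a * o.1) (-2 * b * o.2) (b ^ 2 + o.1 ^ 2 + o.2 ^ 2 - ρ ^ 2)
    (S := Finset.univ.image (ellipseToUnitCircle a b ∘ p))
    (by rw [Finset.card_image_of_injective _ hz, Finset.card_fin])
    (Finset.forall_mem_image.2 fun i _ => normSq_ellipseToUnitCircle (hmem i).1)
    (Finset.forall_mem_image.2 fun i _ =>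
      trigQuadratic_ellipseToUnitCircle ha.ne' hb.ne' (hmem i).1 (hmem i).2)
    (Finset.forall_mem_image.2 fun i _ =>
      trigQuadraticDeriv_ellipseToUnitCircle ha.ne' hb.ne' (htan i).choose_spec.2)
  have hab : a = b := by nlinarith
  have ho1 : o.1 = 0 := by nlinarith
  have ho2 : o.2 = 0 := by nlinarith
  have hρ : ρ ^ 2 = b ^ 2 := by rw [ho1, ho2] at hN; linarith
  refine ⟨?_, hab⟩
  ext q
  simp only [Set.mem_ofPred_eq, ho1, ho2, sub_zero, hab, hρ, ← add_div]
  exact div_eq_one_iff_eq (pow_ne_zero 2 hb.ne')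

/-- If a real circle D passes through three distinct points of a real
ellipse E and at each of these points the tangent line of D coincides with the tangent
line of E (equivalently, the normal directions are proportional), then E = D, so E is a
circle (a = b). -/
theorem circle_tangent_at_three_points (a b : ℝ) (ha : 0 < a) (hb : 0 < b)
    (o : ℝ × ℝ) (ρ : ℝ) (hρ : 0 < ρ)
    (E D : Set (ℝ × ℝ))
    (hE : E = {p : ℝ × ℝ | p.1 ^ 2 / a ^ 2 + p.2 ^ 2 / b ^ 2 = 1})
    (hD : D = {p : ℝ × ℝ | (p.1 - o.1) ^ 2 + (p.2 - o.2) ^ 2 = ρ ^ 2})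
    (p : Fin 3 → ℝ × ℝ) (hinj : Function.Injective p)
    (hmem : ∀ i, p i ∈ E ∧ p i ∈ D)
    (htan : ∀ i, ∃ t : ℝ, t ≠ 0 ∧
      (((p i).1 / a ^ 2, (p i).2 / b ^ 2) : ℝ × ℝ) = t • (p i - o)) :
    E = D ∧ a = b :=
  circle_tangent_at_three_points_general a b ha hb o ρ E D hE hD p hinj hmem htan
end
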